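/- arXiv:1907.06552 — 2 statements merged into one kernel-verified Lean document; each statement's English description precedes it below -/
import Mathlib

section
/- Fix $m \geq 1$ and define $\mathsf{y}_{a,b} = (w_1 - w_2)^{\max(b - ma, 0)} u^a v^b$ in $R = \mathbb{C}[w_1, w_2, u^{\pm 1}, v^{\pm 1}]$. The $\mathbb{C}$-subalgebra of $R$ generated by $\{w_1, w_2\} \cup \{\mathsf{y}_{a,b} : (a,b) \in \mathbb{Z}^2\}$ is equal to the subalgebra generated by $w_1$, $\mathsf{y}_{1,m}$, $\mathsf{y}_{-1,-m}$, $\mathsf{y}_{0,1}$, and $\mathsf{y}_{0,-1}$. -/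
open MvPolynomial

/-- The Laurent polynomial ring `ℂ[w₁, w₂, u^{±1}, v^{±1}]`. -/
noncomputable abbrev LaurentRing : Type :=
  AddMonoidAlgebra (MvPolynomial (Fin 2) ℂ) (ℤ × ℤ)

/-- `w₁` as an element of `ℂ[w₁, w₂, u^{±1}, v^{±1}]`. -/
noncomputable def w₁ : LaurentRing := AddMonoidAlgebra.single (0, 0) (X 0)

/-- `w₂` as an element of `ℂ[w₁, w₂, u^{±1}, v^{±1}]`. -/
noncomputable def w₂ : LaurentRing := AddMonoidAlgebra.single (0, 0) (X 1)

/-- `𝗒_{a,b} = (w₁ - w₂)^{max(b - ma, 0)} u^a v^b`, where `u^a v^b` is the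
monomial `single (a,b) 1`. -/
noncomputable def y (m : ℕ) (a b : ℤ) : LaurentRing :=
  AddMonoidAlgebra.single (a, b) ((X 0 - X 1) ^ (max (b - m * a) 0).toNat)

/-! Every `𝗒_{a,b}` factors as `𝗒_{a,ma} · 𝗒_{0,b-ma}`, since the exponent of `w₁ - w₂` only
depends on `b - ma`. Powers of `𝗒_{1,m}`, `𝗒_{-1,-m}` give all `𝗒_{a,ma}`, and powers of
`𝗒_{0,1}`, `𝗒_{0,-1}` give all `𝗒_{0,k}`. Finally `w₂ = w₁ - 𝗒_{0,1} 𝗒_{0,-1}`. -/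

section

variable (m : ℕ)

lemma y_pow (a b : ℤ) (n : ℕ) : y m a b ^ n = y m (n * a) (n * b) := by
  have hexp : (max (n * b - m * (n * a)) 0).toNat = (max (b - m * a) 0).toNat * n := by
    rw [show n * b - m * (n * a) = n * (b - m * a) by ring]
    obtain h | h := le_total (b - m * a) 0
    · rw [max_eq_right h, max_eq_right (mul_nonpos_of_nonneg_of_nonpos (by positivity) h)]
      simp
    · rw [max_eq_left h, max_eq_left (by positivity), Int.toNat_mul (by positivity) h,
        Int.toNat_natCast, mul_comm]
  simp only [y, AddMonoidAlgebra.single_pow, ← pow_mul, hexp, Prod.smul_mk, nsmul_eq_mul]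

lemma y_intMul_mem {S : Subalgebra ℂ LaurentRing} {a b : ℤ} (hpos : y m a b ∈ S)
    (hneg : y m (-a) (-b) ∈ S) (k : ℤ) : y m (k * a) (k * b) ∈ S := by
  obtain ⟨n, rfl | rfl⟩ := Int.eq_nat_or_neg k
  · exact y_pow m a b n ▸ pow_mem hpos n
  · simpa only [neg_mul, mul_neg, y_pow] using pow_mem hneg n

lemma y_diag_mul_y_zero (a k : ℤ) : y m a (m * a) * y m 0 k = y m a (m * a + k) := by
  simp only [y, AddMonoidAlgebra.single_mul_single, sub_self, max_self, Int.toNat_zero, pow_zero,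
    one_mul, mul_zero, sub_zero, add_sub_cancel_left, Prod.mk_add_mk, add_zero]

lemma y_mem_of_generators_mem {S : Subalgebra ℂ LaurentRing} (h₁ : y m 1 m ∈ S)
    (h₂ : y m (-1) (-m) ∈ S) (h₃ : y m 0 1 ∈ S) (h₄ : y m 0 (-1) ∈ S) (a b : ℤ) :
    y m a b ∈ S := by
  have hdiag : y m a (m * a) ∈ S := by
    simpa [mul_comm] using y_intMul_mem m h₁ h₂ a
  have hzero : y m 0 (b - m * a) ∈ S := by
    simpa using y_intMul_mem m (a := 0) (b := 1) h₃ (by simpa using h₄) (b - m * a)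
  simpa only [y_diag_mul_y_zero, add_sub_cancel] using mul_mem hdiag hzero

lemma w₂_eq_sub : w₂ = w₁ - y m 0 1 * y m 0 (-1) := by
  rw [y, y, AddMonoidAlgebra.single_mul_single, w₁, w₂]
  norm_num

end

theorem stmt11_general (m : ℕ) :
    Algebra.adjoin ℂ ({w₁, w₂} ∪ Set.range (fun p : ℤ × ℤ => y m p.1 p.2)) =
      Algebra.adjoin ℂ {w₁, y m 1 m, y m (-1) (-m), y m 0 1, y m 0 (-1)} := by
  set S := Algebra.adjoin ℂ {w₁, y m 1 m, y m (-1) (-m), y m 0 1, y m 0 (-1)}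
  have hw₁ : w₁ ∈ S := Algebra.subset_adjoin (by simp)
  have hy : ∀ a b, y m a b ∈ S := y_mem_of_generators_mem m (Algebra.subset_adjoin (by simp))
    (Algebra.subset_adjoin (by simp)) (Algebra.subset_adjoin (by simp))
    (Algebra.subset_adjoin (by simp))
  apply le_antisymm
  · rw [Algebra.adjoin_le_iff]
    rintro x ((rfl | rfl) | ⟨⟨a, b⟩, rfl⟩)
    · exact hw₁
    · exact w₂_eq_sub m ▸ sub_mem hw₁ (mul_mem (hy 0 1) (hy 0 (-1)))
    · exact hy a b
  · rw [Algebra.adjoin_le_iff]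
    rintro x (rfl | rfl | rfl | rfl | rfl)
    · exact Algebra.subset_adjoin (Or.inl (by simp))
    all_goals exact Algebra.subset_adjoin (Or.inr ⟨(_, _), rfl⟩)

/-- The Coulomb branch of the rank-2 theory: the subalgebra generated by
`w₁, w₂` and all `𝗒_{a,b}` is generated by `w₁, 𝗒_{1,m}, 𝗒_{-1,-m}, 𝗒_{0,1},
𝗒_{0,-1}`. -/
theorem stmt11 (m : ℕ) (hm : 1 ≤ m) :
    Algebra.adjoin ℂ ({w₁, w₂} ∪ Set.range (fun p : ℤ × ℤ => y m p.1 p.2)) =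
      Algebra.adjoin ℂ {w₁, y m 1 m, y m (-1) (-m), y m 0 1, y m 0 (-1)} :=
  stmt11_general m
end

section
/- Fix integers $m \geq 1$ and $\lambda \geq 0$, and write $\lambda = m k' + k''$ with $0 \leq k'' < m$. Let $A = K[[x^m]] \subseteq B = K[[x]]$ for a field $K$. Then the $K$-vector space $\operatorname{Hom}_A(x^\lambda B, A) / \operatorname{Hom}_A(B, A)$ (quotient by the image under restriction of maps defined on $B$) has dimension $\lambda$ over $K$. -/
/-!
`x^lam K[[x]]` is free over `A = K[[x^m]]` on the monomials `x^(m c_r + r)`, `r < m`, where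
`c_r = countBelow m lam r` counts the `n < lam` with `n ≡ r [MOD m]`, and `K[[x]]` is free over
`A` on the `x^r`, `r < m`. Since `x^(m c_r + r) = x^(m c_r) x^r`, an `A`-linear map
`G : x^lam K[[x]] → A` extends to `K[[x]]` iff each `G(x^(m c_r + r))` is divisible by `x^(m c_r)`
in `A`, i.e. iff its coefficients of `x^(m t)`, `t < c_r`, vanish. Indexed by `n = m t + r < lam`,
these coefficients form a surjective `K`-linear map onto `K^lam` whose kernel is the image of
restriction.
-/

open PowerSeries

/-- The subring `A = K[[x^m]]` of `B = K[[x]]`. -/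
def powerSeriesSupportedOn (K : Type*) [Field K] (m : ℕ) : Subalgebra K (PowerSeries K) where
  carrier := {f | ∀ i, ¬ m ∣ i → PowerSeries.coeff i f = 0}
  mul_mem' {f g} hf hg := by
    intro i hi
    rw [PowerSeries.coeff_mul]
    apply Finset.sum_eq_zero
    intro p hp
    have hsum : p.1 + p.2 = i := Finset.HasAntidiagonal.mem_antidiagonal.mp hp
    by_cases h1 : m ∣ p.1
    · have h2 : ¬ m ∣ p.2 := fun h2 => hi (hsum ▸ dvd_add h1 h2)
      rw [hg p.2 h2, mul_zero]
    · rw [hf p.1 h1, zero_mul]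
  add_mem' {f g} hf hg := by
    intro i hi
    rw [map_add, hf i hi, hg i hi, add_zero]
  algebraMap_mem' k := by
    intro i hi
    have hi0 : i ≠ 0 := fun h => hi (h ▸ dvd_zero m)
    simp [PowerSeries.algebraMap_apply, PowerSeries.coeff_C, hi0]

/-- The `A`-submodule `x^λ B = x^λ K[[x]]` of `B = K[[x]]`, i.e. power series
whose coefficients vanish in degrees `< λ`. -/
def xPowMulSubmodule (K : Type*) [Field K] (m lam : ℕ) :
    Submodule (powerSeriesSupportedOn K m) (PowerSeries K) where
  carrier := {f | ∀ i, i < lam → PowerSeries.coeff i f = 0}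
  add_mem' {f g} hf hg := by
    intro i hi
    rw [map_add, hf i hi, hg i hi, add_zero]
  zero_mem' := by intro i _; simp
  smul_mem' a f hf := by
    intro i hi
    rw [Algebra.smul_def, PowerSeries.coeff_mul]
    apply Finset.sum_eq_zero
    intro p hp
    have hsum : p.1 + p.2 = i := Finset.HasAntidiagonal.mem_antidiagonal.mp hp
    have h2 : p.2 < lam := lt_of_le_of_lt (le_of_add_le_right hsum.le) hi
    rw [hf p.2 h2, mul_zero]


/-- For `r < m`, `m * countBelow m lam r + r` is the least `n ≥ lam` with `n ≡ r [MOD m]`. -/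
def countBelow (m lam r : ℕ) : ℕ := (lam - r) ⌈/⌉ m

lemma mul_add_lt_iff_lt_countBelow {m lam r : ℕ} (hm : 0 < m) (t : ℕ) :
    m * t + r < lam ↔ t < countBelow m lam r := by
  rw [countBelow, ← not_iff_not, not_lt, not_lt, ceilDiv_le_iff_le_mul hm]
  omega

lemma lt_iff_lt_mul_countBelow_add {m lam n : ℕ} (hm : 0 < m) :
    n < lam ↔ n < m * countBelow m lam (n % m) + n % m := by
  have hn := Nat.div_add_mod n m
  calc n < lam ↔ m * (n / m) + n % m < lam := by rw [hn]
    _ ↔ n / m < countBelow m lam (n % m) := mul_add_lt_iff_lt_countBelow hm _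
    _ ↔ m * (n / m) < m * countBelow m lam (n % m) := (Nat.mul_lt_mul_left hm).symm
    _ ↔ _ := by omega

lemma mul_countBelow_add_mod {m : ℕ} (lam : ℕ) (r : Fin m) :
    (m * countBelow m lam r + r) % m = r := by
  rw [Nat.mul_add_mod, Nat.mod_eq_of_lt r.isLt]

lemma le_mul_countBelow_add {m : ℕ} (lam : ℕ) (r : Fin m) :
    lam ≤ m * countBelow m lam r + r := by
  by_contra! h
  have := (lt_iff_lt_mul_countBelow_add r.pos).mp h
  rwa [mul_countBelow_add_mod, lt_self_iff_false] at this

namespace PowerSeries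

variable {K : Type*} [Field K]

noncomputable def stridePart (m s : ℕ) (f : K⟦X⟧) : K⟦X⟧ :=
  mk fun n => if m ∣ n then coeff (s + n) f else 0

@[simp]
lemma coeff_stridePart (m s n : ℕ) (f : K⟦X⟧) :
    coeff n (stridePart m s f) = if m ∣ n then coeff (s + n) f else 0 :=
  coeff_mk _ _

lemma stridePart_mem (m s : ℕ) (f : K⟦X⟧) : stridePart m s f ∈ powerSeriesSupportedOn K m :=
  fun i hi => by simp [hi]

lemma stridePart_add (m s : ℕ) (f g : K⟦X⟧) :
    stridePart m s (f + g) = stridePart m s f + stridePart m s g := by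
  ext n
  simp only [coeff_stridePart, map_add]
  split_ifs <;> simp

lemma stridePart_X_pow_self (m s : ℕ) : stridePart m s (X ^ s : K⟦X⟧) = 1 := by
  ext n
  rcases Nat.eq_zero_or_pos n with rfl | hn
  · simp
  · simp [coeff_X_pow, coeff_one, hn.ne']

lemma stridePart_X_pow_of_not_modEq {m s k : ℕ} (h : ¬ s ≡ k [MOD m]) :
    stridePart m s (X ^ k : K⟦X⟧) = 0 := by
  ext n
  simp only [coeff_stridePart, coeff_X_pow, map_zero]
  split_ifs with hn hk
  · subst hk
    exact absurd ((Nat.modEq_iff_dvd' (Nat.le_add_right s n)).mpr (by simpa)) h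
  all_goals rfl

/-- Multiplication by `a ∈ K[[x^m]]` only mixes coefficients within a residue class mod `m`;
the hypothesis on `f` rules out the contributions from below degree `s`. -/
lemma stridePart_mul {m s : ℕ} {a f : K⟦X⟧} (ha : a ∈ powerSeriesSupportedOn K m)
    (hf : ∀ q < s, q ≡ s [MOD m] → coeff q f = 0) :
    stridePart m s (a * f) = a * stridePart m s f := by
  ext n
  by_cases hn : m ∣ n
  swap
  · rw [coeff_stridePart, if_neg hn,
      (powerSeriesSupportedOn K m).mul_mem ha (stridePart_mem m s f) n hn]
  have high_terms_vanish : ∀ k ∈ Finset.range (s + n).succ, k ∉ Finset.range n.succ →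
      coeff k a * coeff (s + n - k) f = 0 := by
    intro k hk hk'
    simp only [Finset.mem_range, Nat.lt_succ_iff] at hk hk'
    by_cases hdk : m ∣ k
    · refine mul_eq_zero_of_right _ (hf _ (by omega) ?_)
      refine (Nat.modEq_iff_dvd' (by omega)).mpr ?_
      rw [show s - (s + n - k) = k - n by omega]
      exact Nat.dvd_sub hdk hn
    · rw [ha k hdk, zero_mul]
  rw [coeff_stridePart, if_pos hn, coeff_mul, coeff_mul,
    Finset.Nat.sum_antidiagonal_eq_sum_range_succ_mk,
    Finset.Nat.sum_antidiagonal_eq_sum_range_succ_mk,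
    ← Finset.sum_subset (Finset.range_subset_range.mpr (by omega)) high_terms_vanish]
  refine Finset.sum_congr rfl fun k hk => ?_
  rw [Finset.mem_range, Nat.lt_succ_iff] at hk
  by_cases hdk : m ∣ k
  · rw [coeff_stridePart, if_pos (Nat.dvd_sub hn hdk), show s + (n - k) = s + n - k by omega]
  · rw [ha k hdk, zero_mul, zero_mul]

lemma stridePart_eq_X_pow_mul {m s k : ℕ} {f : K⟦X⟧}
    (hf : ∀ q < m * k + s, q ≡ s [MOD m] → coeff q f = 0) :
    stridePart m s f = X ^ (m * k) * stridePart m (m * k + s) f := by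
  ext n
  rw [coeff_X_pow_mul', coeff_stridePart]
  by_cases hn : m ∣ n
  · split_ifs with hkn
    · rw [coeff_stridePart, if_pos (Nat.dvd_sub hn (dvd_mul_right m k)),
        show m * k + s + (n - m * k) = s + n by omega]
    · exact hf _ (by omega) ((Nat.modEq_iff_dvd' (Nat.le_add_right s n)).mpr (by simpa)).symm
  · split_ifs with hkn
    · rw [coeff_stridePart, if_neg]
      exact fun h => hn (by simpa [Nat.sub_add_cancel hkn] using dvd_add h (dvd_mul_right m k))
    · rfl

lemma sum_stridePart_mul_X_pow {m lam : ℕ} (hm : 0 < m) {f : K⟦X⟧}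
    (hf : ∀ n < lam, coeff n f = 0) :
    ∑ r : Fin m, stridePart m (m * countBelow m lam r + r) f * X ^ (m * countBelow m lam r + r)
      = f := by
  ext n
  simp only [map_sum, coeff_mul_X_pow', coeff_stridePart]
  by_cases hn : n < lam
  · refine (Finset.sum_eq_zero fun r _ => if_neg ?_).trans (hf n hn).symm
    have := le_mul_countBelow_add lam r
    omega
  let r₀ : Fin m := ⟨n % m, Nat.mod_lt n hm⟩
  have hle : m * countBelow m lam r₀ + r₀ ≤ n :=
    not_lt.mp (mt (lt_iff_lt_mul_countBelow_add hm).mpr hn)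
  rw [Finset.sum_eq_single r₀]
  · rw [if_pos hle, if_pos, Nat.add_sub_cancel' hle]
    refine (Nat.modEq_iff_dvd' hle).mp ?_
    rw [Nat.ModEq, mul_countBelow_add_mod]
  · intro r _ hr
    refine ite_eq_right_iff.mpr fun hle' => ite_eq_right_iff.mpr fun hdvd => absurd ?_ hr
    have := (Nat.modEq_iff_dvd' hle').mpr hdvd
    rw [Nat.ModEq, mul_countBelow_add_mod] at this
    exact Fin.ext this
  · simp

end PowerSeries

section HomXPowMul

variable {K : Type*} [Field K] {m lam : ℕ}

lemma X_pow_mul_mem_powerSeriesSupportedOn (m k : ℕ) :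
    (X : K⟦X⟧) ^ (m * k) ∈ powerSeriesSupportedOn K m :=
  fun i hi => by rw [coeff_X_pow, if_neg fun h => hi ⟨k, h⟩]

lemma X_pow_mem_xPowMulSubmodule {k : ℕ} (h : lam ≤ k) :
    (X : K⟦X⟧) ^ k ∈ xPowMulSubmodule K m lam :=
  fun i hi => by rw [coeff_X_pow, if_neg (by omega)]

lemma coeff_eq_zero_of_lt_mul_countBelow_add (f : xPowMulSubmodule K m lam) (r : Fin m) {q : ℕ}
    (hq : q < m * countBelow m lam r + r) (hqr : q % m = r) : coeff q (f : K⟦X⟧) = 0 :=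
  f.2 q <| (lt_iff_lt_mul_countBelow_add r.pos).mpr (by rwa [hqr])

variable (K)

noncomputable def supportedXPow (m k : ℕ) : powerSeriesSupportedOn K m :=
  ⟨X ^ (m * k), X_pow_mul_mem_powerSeriesSupportedOn m k⟩

noncomputable def xPowMulGen (lam : ℕ) (r : Fin m) : xPowMulSubmodule K m lam :=
  ⟨X ^ (m * countBelow m lam r + r), X_pow_mem_xPowMulSubmodule (le_mul_countBelow_add lam r)⟩

noncomputable def residueCoord (r : Fin m) :
    K⟦X⟧ →ₗ[powerSeriesSupportedOn K m] powerSeriesSupportedOn K m where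
  toFun f := ⟨stridePart m r f, stridePart_mem m r f⟩
  map_add' f g := Subtype.ext (stridePart_add m r f g)
  map_smul' a f := Subtype.ext <| stridePart_mul a.2 fun q hq hqr => by
    rw [Nat.ModEq, Nat.mod_eq_of_lt (hq.trans r.isLt), Nat.mod_eq_of_lt r.isLt] at hqr
    omega

noncomputable def xPowMulCoord (lam : ℕ) (r : Fin m) :
    xPowMulSubmodule K m lam →ₗ[powerSeriesSupportedOn K m] powerSeriesSupportedOn K m where
  toFun f := ⟨stridePart m (m * countBelow m lam r + r) f, stridePart_mem _ _ _⟩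
  map_add' f g := Subtype.ext (stridePart_add m _ (f : K⟦X⟧) g)
  map_smul' a f := Subtype.ext <| stridePart_mul a.2 fun _ hq hqr =>
    coeff_eq_zero_of_lt_mul_countBelow_add f r hq (Eq.trans hqr (mul_countBelow_add_mod lam r))

variable {K}

lemma coe_residueCoord_apply (r : Fin m) (f : K⟦X⟧) :
    (residueCoord K r f : K⟦X⟧) = stridePart m r f :=
  rfl

lemma coe_xPowMulCoord_apply (r : Fin m) (f : xPowMulSubmodule K m lam) :
    (xPowMulCoord K lam r f : K⟦X⟧) = stridePart m (m * countBelow m lam r + r) f :=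
  rfl

lemma coe_xPowMulGen (r : Fin m) :
    (xPowMulGen K lam r : K⟦X⟧) = X ^ (m * countBelow m lam r + r) :=
  rfl

lemma residueCoord_eq_X_pow_mul_xPowMulCoord (r : Fin m) (f : xPowMulSubmodule K m lam) :
    (residueCoord K r (f : K⟦X⟧) : K⟦X⟧) =
      (X : K⟦X⟧) ^ (m * countBelow m lam r) * xPowMulCoord K lam r f := by
  rw [coe_residueCoord_apply, coe_xPowMulCoord_apply]
  exact stridePart_eq_X_pow_mul fun _ hq hqr =>
    coeff_eq_zero_of_lt_mul_countBelow_add f r hq (Eq.trans hqr (Nat.mod_eq_of_lt r.isLt))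

lemma sum_xPowMulCoord_smul_xPowMulGen (hm : 0 < m) (f : xPowMulSubmodule K m lam) :
    ∑ r, xPowMulCoord K lam r f • xPowMulGen K lam r = f :=
  Subtype.ext <| by
    simp only [Submodule.coe_sum, Submodule.coe_smul, Subalgebra.smul_def, smul_eq_mul,
      coe_xPowMulCoord_apply, coe_xPowMulGen]
    exact sum_stridePart_mul_X_pow hm f.2

end HomXPowMul

section RestrictionObstruction

variable {K : Type*} [Field K] {m lam : ℕ}

lemma exists_eq_X_pow_mul_of_coeff_mul_eq_zero {a : K⟦X⟧}
    (ha : a ∈ powerSeriesSupportedOn K m) {k : ℕ} (h : ∀ t < k, coeff (m * t) a = 0) :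
    ∃ b ∈ powerSeriesSupportedOn K m, a = X ^ (m * k) * b := by
  obtain ⟨b, hb⟩ := X_pow_dvd_iff.mpr fun q hq => by
    by_cases hdvd : m ∣ q
    · obtain ⟨t, rfl⟩ := hdvd
      exact h t (Nat.lt_of_mul_lt_mul_left hq)
    · exact ha q hdvd
  refine ⟨b, fun q hq => ?_, hb⟩
  rw [← coeff_X_pow_mul b (m * k) q, ← hb]
  exact ha _ ((Nat.dvd_add_left (dvd_mul_right m k)).not.mpr hq)

variable (K) (lam) (hm : 0 < m)

/-- At `n = m t + r < lam`, the coefficient of `x^(m t)` in `G(x^(m c_r + r))`. -/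
noncomputable def restrictionObstruction :
    (xPowMulSubmodule K m lam →ₗ[powerSeriesSupportedOn K m] powerSeriesSupportedOn K m)
      →ₗ[K] (Fin lam → K) where
  toFun G d := coeff (m * (d / m)) (G (xPowMulGen K lam ⟨d % m, Nat.mod_lt _ hm⟩) : K⟦X⟧)
  map_add' _ _ := by ext; simp
  map_smul' _ _ := by ext; simp

variable {K lam hm}

lemma restrictionObstruction_apply_mul_add
    (G : xPowMulSubmodule K m lam →ₗ[powerSeriesSupportedOn K m] powerSeriesSupportedOn K m)
    (r : Fin m) (t : ℕ) (ht : m * t + r < lam) :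
    restrictionObstruction K lam hm G ⟨m * t + r, ht⟩ =
      coeff (m * t) (G (xPowMulGen K lam r) : K⟦X⟧) := by
  simp [restrictionObstruction, Nat.mul_add_div hm, Nat.mod_eq_of_lt r.isLt,
    Nat.div_eq_of_lt r.isLt]

lemma restrictionObstruction_comp_subtype
    (F : K⟦X⟧ →ₗ[powerSeriesSupportedOn K m] powerSeriesSupportedOn K m) :
    restrictionObstruction K lam hm (F.comp (xPowMulSubmodule K m lam).subtype) = 0 := by
  ext d
  let r : Fin m := ⟨d % m, Nat.mod_lt _ hm⟩
  have hgen : (xPowMulGen K lam r : K⟦X⟧) =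
      supportedXPow K m (countBelow m lam r) • X ^ (r : ℕ) := by
    rw [coe_xPowMulGen, Subalgebra.smul_def, smul_eq_mul, pow_add]
    rfl
  have hd : d / m < countBelow m lam r :=
    (mul_add_lt_iff_lt_countBelow hm _).mp ((Nat.div_add_mod d m).symm ▸ d.2)
  show coeff (m * (d / m)) (F (xPowMulGen K lam r) : K⟦X⟧) = 0
  rw [hgen, map_smul, smul_eq_mul, Subalgebra.coe_mul, supportedXPow, coeff_X_pow_mul', if_neg]
  exact fun h => (Nat.le_of_mul_le_mul_left h hm).not_gt hd

/-- If the obstruction vanishes, `G(x^(m c_r + r)) = x^(m c_r) b_r` with `b_r ∈ A`, and `G` is the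
restriction of `f ↦ ∑ r, b_r * stridePart m r f`. -/
lemma exists_comp_subtype_eq_of_restrictionObstruction_eq_zero
    {G : xPowMulSubmodule K m lam →ₗ[powerSeriesSupportedOn K m] powerSeriesSupportedOn K m}
    (hG : restrictionObstruction K lam hm G = 0) :
    ∃ F : K⟦X⟧ →ₗ[powerSeriesSupportedOn K m] powerSeriesSupportedOn K m,
      F.comp (xPowMulSubmodule K m lam).subtype = G := by
  have hdiv (r : Fin m) : ∃ b ∈ powerSeriesSupportedOn K m,
      (G (xPowMulGen K lam r) : K⟦X⟧) = X ^ (m * countBelow m lam r) * b := by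
    refine exists_eq_X_pow_mul_of_coeff_mul_eq_zero (G _).2 fun t ht => ?_
    have hlt := (mul_add_lt_iff_lt_countBelow hm t).mpr ht
    rw [← restrictionObstruction_apply_mul_add (hm := hm) G r t hlt, hG, Pi.zero_apply]
  choose b hbA hb using hdiv
  refine ⟨∑ r, (⟨b r, hbA r⟩ : powerSeriesSupportedOn K m) • residueCoord K r, ?_⟩
  refine LinearMap.ext fun f => Subtype.ext ?_
  conv_rhs => rw [← sum_xPowMulCoord_smul_xPowMulGen hm f]
  simp only [LinearMap.comp_apply, Submodule.subtype_apply, LinearMap.sum_apply,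
    LinearMap.smul_apply, map_sum, map_smul, AddSubmonoidClass.coe_finsetSum, smul_eq_mul,
    Subalgebra.coe_mul, residueCoord_eq_X_pow_mul_xPowMulCoord, hb]
  exact Finset.sum_congr rfl fun r _ => by ring

lemma restrictionObstruction_smul_xPowMulCoord (d d' : Fin lam) :
    restrictionObstruction K lam hm
        (supportedXPow K m (d / m) • xPowMulCoord K lam ⟨d % m, Nat.mod_lt _ hm⟩) d'
      = if d = d' then 1 else 0 := by
  show coeff (m * (d' / m)) ((X : K⟦X⟧) ^ (m * (d / m)) *
    stridePart m (m * countBelow m lam (d % m) + d % m)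
      (X ^ (m * countBelow m lam (d' % m) + d' % m))) = _
  by_cases hmod : (d : ℕ) % m = d' % m
  · rw [hmod, stridePart_X_pow_self, mul_one, coeff_X_pow]
    refine if_congr ⟨fun h => Fin.ext ?_, fun h => by rw [h]⟩ rfl rfl
    rw [← Nat.div_add_mod d m, ← Nat.div_add_mod d' m, Nat.eq_of_mul_eq_mul_left hm h, hmod]
  · rw [stridePart_X_pow_of_not_modEq, mul_zero, map_zero, if_neg (fun h => hmod (by rw [h]))]
    rwa [Nat.ModEq, Nat.mul_add_mod, Nat.mul_add_mod, Nat.mod_mod, Nat.mod_mod]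

lemma restrictionObstruction_surjective :
    Function.Surjective (restrictionObstruction K lam hm) := by
  intro v
  refine ⟨∑ d, v d •
    supportedXPow K m (d / m) • xPowMulCoord K lam ⟨d % m, Nat.mod_lt _ hm⟩, ?_⟩
  ext d'
  simp only [map_sum, map_smul, Finset.sum_apply, Pi.smul_apply,
    restrictionObstruction_smul_xPowMulCoord, smul_eq_mul, mul_ite, mul_one, mul_zero,
    Finset.sum_ite_eq', Finset.mem_univ, if_true]

end RestrictionObstruction

/-- With `A = K[[x^m]] ⊆ B = K[[x]]` and `λ = m k' + k''`, `0 ≤ k'' < m`, the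
`K`-vector space `Hom_A(x^λ B, A) / Hom_A(B, A)` (quotient by the image of the
restriction map) has dimension `λ`. -/
theorem stmt19 (K : Type*) [Field K] (m : ℕ) (hm : 0 < m) (lam : ℕ) :
    ∃ W : Submodule K
        ((xPowMulSubmodule K m lam) →ₗ[powerSeriesSupportedOn K m]
          (powerSeriesSupportedOn K m)),
      (W : Set _) = Set.range
        (fun F : PowerSeries K →ₗ[powerSeriesSupportedOn K m]
            (powerSeriesSupportedOn K m) =>
          F.comp (xPowMulSubmodule K m lam).subtype) ∧
      Module.finrank K
        (@HasQuotient.Quotient _ _ (@Submodule.hasQuotient K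
            ((xPowMulSubmodule K m lam) →ₗ[powerSeriesSupportedOn K m]
              (powerSeriesSupportedOn K m)) _ LinearMap.addCommGroup LinearMap.module) W) = lam := by
  refine ⟨LinearMap.ker (restrictionObstruction K lam hm), ?_, ?_⟩
  · ext G
    simp only [SetLike.mem_coe, LinearMap.mem_ker, Set.mem_range]
    exact ⟨exists_comp_subtype_eq_of_restrictionObstruction_eq_zero,
      by rintro ⟨F, rfl⟩; exact restrictionObstruction_comp_subtype F⟩
  · exact (@LinearMap.quotKerEquivOfSurjective K _ (Fin lam → K) _ LinearMap.addCommGroup _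
      LinearMap.module _ _ restrictionObstruction_surjective).finrank_eq.trans
      (Module.finrank_fin_fun K)
end
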